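/- The set of symmetric unitary matrices coincides with the set of matrices of the form W Wᵗ with W unitary: every N×N unitary symmetric matrix U admits a factorization U = W Wᵗ for some W ∈ U(N), and conversely every matrix of the form W Wᵗ with W unitary is unitary and symmetric. -/

import Mathlib

/-!
A unitary matrix `U` is normal with finite spectrum on the unit circle; on a finite set even the
discontinuous branch `z ↦ z ^ (1/2)` is continuous, so the functional calculus gives a unitary
square root `W = U ^ (1/2)`. On a finite spectrum every function agrees with an interpolating
polynomial, so `W` is a polynomial in `U`. Transposition commutes with polynomial evaluation, so
for symmetric `U` also `Wᵀ = W`, and `U = W * W = W * Wᵀ`.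
-/

open Matrix Polynomial

theorem Matrix.transpose_aeval {n R : Type*} [Fintype n] [DecidableEq n] [CommSemiring R]
    (A : Matrix n n R) (p : R[X]) : (aeval A p)ᵀ = aeval Aᵀ p := by
  have h := aeval_algHom_apply (Matrix.transposeAlgEquiv n R R) A p
  rw [Matrix.transposeAlgEquiv_apply, aeval_op_apply] at h
  exact (MulOpposite.op_injective h).symm

theorem exists_aeval_eq_cfc_of_finite_spectrum {R A : Type*} {p : A → Prop} [Field R]
    [StarRing R] [MetricSpace R] [IsTopologicalRing R] [ContinuousStar R] [TopologicalSpace A]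
    [Ring A] [StarRing A] [Algebra R A] [ContinuousFunctionalCalculus R A p]
    (f : R → R) {a : A} (hfin : (spectrum R a).Finite) (ha : p a := by cfc_tac) :
    ∃ q : R[X], cfc f a = aeval a q := by
  classical
  refine ⟨Lagrange.interpolate hfin.toFinset id f, ?_⟩
  rw [← cfc_polynomial _ a]
  exact cfc_congr fun x hx =>
    (Lagrange.eval_interpolate_at_node f (Set.injOn_id _) (hfin.mem_toFinset.mpr hx)).symm

section UnitarySqrt

variable {A : Type*} [CStarAlgebra A] {u : A}

theorem cfc_cpow_inv_two_mul_self [IsStarNormal u] (hfin : (spectrum ℂ u).Finite) :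
    cfc (fun z : ℂ => z ^ (2⁻¹ : ℂ)) u * cfc (fun z : ℂ => z ^ (2⁻¹ : ℂ)) u = u := by
  rw [← cfc_mul _ _ u (hfin.continuousOn _) (hfin.continuousOn _)]
  conv_rhs => rw [← cfc_id' ℂ u]
  exact cfc_congr fun z _ => by simpa [sq] using Complex.cpow_ofNat_inv_pow z 2

theorem cfc_cpow_inv_two_mem_unitary (hu : u ∈ unitary A) (hfin : (spectrum ℂ u).Finite) :
    cfc (fun z : ℂ => z ^ (2⁻¹ : ℂ)) u ∈ unitary A := by
  have := isStarNormal_of_mem_unitary hu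
  rw [cfc_unitary_iff _ u (hf := hfin.continuousOn _)]
  intro z hz
  have hz1 : ‖z‖ = 1 := by simpa using spectrum.subset_circle_of_unitary hu hz
  have hz0 : z ≠ 0 := norm_ne_zero_iff.mp (by simp [hz1])
  rw [RCLike.star_def, Complex.conj_mul', Complex.norm_cpow_of_ne_zero hz0, hz1]
  simp

end UnitarySqrt

theorem Matrix.exists_aeval_mem_unitaryGroup_mul_self_eq {n : Type*} [Fintype n] [DecidableEq n]
    {U : Matrix n n ℂ} (hU : U ∈ unitaryGroup n ℂ) :
    ∃ q : ℂ[X], aeval U q ∈ unitaryGroup n ℂ ∧ aeval U q * aeval U q = U := by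
  open scoped Matrix.Norms.L2Operator in
  have := isStarNormal_of_mem_unitary hU
  obtain ⟨q, hq⟩ :=
    exists_aeval_eq_cfc_of_finite_spectrum (fun z : ℂ => z ^ (2⁻¹ : ℂ)) U.finite_spectrum
  exact ⟨q, hq ▸ cfc_cpow_inv_two_mem_unitary hU U.finite_spectrum,
    hq ▸ cfc_cpow_inv_two_mul_self U.finite_spectrum⟩

/-- A matrix is symmetric and unitary if and only if it has the form `W Wᵀ` with `W`
unitary: every symmetric unitary `U` factorizes as `U = W Wᵀ` with `W ∈ U(N)`, and
conversely every `W Wᵀ` with `W` unitary is symmetric and unitary. -/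
theorem symmetric_unitary_iff_WWt (N : ℕ) (U : Matrix (Fin N) (Fin N) ℂ) :
    (Uᴴ * U = 1 ∧ U = Uᵀ) ↔
      ∃ W : Matrix (Fin N) (Fin N) ℂ, Wᴴ * W = 1 ∧ U = W * Wᵀ := by
  constructor
  · rintro ⟨hU, hsymm⟩
    obtain ⟨q, hW, hWW⟩ :=
      exists_aeval_mem_unitaryGroup_mul_self_eq (mem_unitaryGroup_iff'.mpr hU)
    refine ⟨aeval U q, mem_unitaryGroup_iff'.mp hW, ?_⟩
    rw [transpose_aeval, ← hsymm, hWW]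
  · rintro ⟨W, hW, rfl⟩
    have hWu : W ∈ unitaryGroup (Fin N) ℂ := mem_unitaryGroup_iff'.mpr hW
    refine ⟨mem_unitaryGroup_iff'.mp (mul_mem hWu (transpose_mem_unitaryGroup_iff.mpr hWu)), ?_⟩
    rw [transpose_mul, transpose_transpose]
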